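/- arXiv:1210.3425 — 4 statements merged into one kernel-verified Lean document; each statement's English description precedes it below -/
import Mathlib

section
/- Let n be a natural number. The number of sequences of length n with entries in the four-element set {(1,0), (-1,0), (0,1), (0,-1)} ⊆ ℤ × ℤ whose entries sum to (0,0) equals (n choose n/2)² when n is even, and equals 0 when n is odd. -/
/-!
The linear map `(x, y) ↦ (x + y, x - y)` is injective on `ℤ²` and carries the four steps
`(±1, 0), (0, ±1)` onto `{±1} × {±1}`. A word in the steps is therefore trivial exactly when its
image is a pair of `±1`-sequences that both sum to zero, and a `±1`-sequence of length `n` sums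
to zero exactly when it has `n / 2` entries `+1`, which needs `n` even.
-/

open Finset

variable {ι A B : Type*}

def zeroSumWords (ι : Type*) [Fintype ι] [AddCommMonoid A] (S : Set A) : Set (ι → A) :=
  {w | (∀ i, w i ∈ S) ∧ ∑ i, w i = 0}

section ZeroSumWords

variable [Fintype ι] [AddCommMonoid A] [AddCommMonoid B]

theorem card_zeroSumWords_image {f : A →+ B} (hf : Function.Injective f) (S : Set A) :
    Nat.card (zeroSumWords ι (f '' S)) = Nat.card (zeroSumWords ι S) := by
  refine (Nat.card_congr (Equiv.ofBijective
    (fun w : zeroSumWords ι S => (⟨f ∘ w.1, fun i => Set.mem_image_of_mem f (w.2.1 i), ?_⟩ :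
      zeroSumWords ι (f '' S))) ⟨?_, ?_⟩)).symm
  · simp [← map_sum, w.2.2]
  · intro v w h
    exact Subtype.ext (hf.comp_left (congrArg Subtype.val h))
  · rintro ⟨v, hvS, hv0⟩
    choose a haS hav using id hvS
    refine ⟨⟨a, haS, hf ?_⟩, Subtype.ext (funext hav)⟩
    simpa [map_sum, hav] using hv0

theorem card_zeroSumWords_prod (S : Set A) (T : Set B) :
    Nat.card (zeroSumWords ι (S ×ˢ T)) =
      Nat.card (zeroSumWords ι S) * Nat.card (zeroSumWords ι T) := by
  rw [← Nat.card_prod]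
  refine Nat.card_congr (((Equiv.arrowProdEquivProdArrow ι (fun _ => A) (fun _ => B)).subtypeEquiv
    fun w => ?_).trans Equiv.subtypeProdEquivProd)
  simp only [zeroSumWords, Set.mem_ofPred_eq, Set.mem_prod, forall_and, Prod.ext_iff, Prod.fst_sum,
    Prod.snd_sum, Prod.fst_zero, Prod.snd_zero, Equiv.arrowProdEquivProdArrow_apply]
  exact and_and_and_comm

end ZeroSumWords

theorem card_finset_two_mul_card_eq_card [Fintype ι] :
    Nat.card {s : Finset ι // 2 * #s = Fintype.card ι} =
      if Even (Fintype.card ι) then (Fintype.card ι).choose (Fintype.card ι / 2) else 0 := by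
  split_ifs with hn
  · obtain ⟨k, hk⟩ := hn
    have hhalf (s : Finset ι) : 2 * #s = Fintype.card ι ↔ #s = Fintype.card ι / 2 := by omega
    rw [Nat.card_congr (Equiv.subtypeEquivRight hhalf), Nat.card_eq_fintype_card,
      Fintype.card_finset_len]
  · have : IsEmpty {s : Finset ι // 2 * #s = Fintype.card ι} := ⟨fun ⟨s, hs⟩ => hn ⟨#s, by omega⟩⟩
    exact Nat.card_of_isEmpty

section SignVector

variable [DecidableEq ι]

def signVector (s : Finset ι) : ι → ℤ := fun i => if i ∈ s then 1 else -1

theorem signVector_injective : Function.Injective (signVector (ι := ι)) := by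
  intro s t h
  ext i
  have := congrFun h i
  by_cases hs : i ∈ s <;> by_cases ht : i ∈ t <;> simp_all [signVector]

variable [Fintype ι]

theorem range_signVector :
    Set.range (signVector (ι := ι)) = {ε | ∀ i, ε i ∈ ({1, -1} : Set ℤ)} := by
  ext ε
  refine ⟨?_, fun hε => ⟨({i | ε i = 1} : Finset ι), funext fun i => ?_⟩⟩
  · rintro ⟨s, rfl⟩ i
    by_cases hs : i ∈ s <;> simp [signVector, hs]
  · obtain h | h : ε i = 1 ∨ ε i = -1 := hε i <;> simp [signVector, h]

theorem sum_signVector (s : Finset ι) :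
    ∑ i, signVector s i = 2 * #s - Fintype.card ι := by
  have hcompl : #s + #{i | i ∉ s} = Fintype.card ι := by
    rw [filter_notMem_eq_sdiff, add_comm, card_sdiff_add_card_eq_card (subset_univ s), card_univ]
  simp only [signVector, sum_ite, sum_const, nsmul_eq_mul, mul_one, mul_neg, filter_univ_mem]
  omega

theorem card_zeroSumWords_signs :
    Nat.card (zeroSumWords ι ({1, -1} : Set ℤ)) =
      if Even (Fintype.card ι) then (Fintype.card ι).choose (Fintype.card ι / 2) else 0 := by
  rw [← card_finset_two_mul_card_eq_card]
  refine (Nat.card_congr (Equiv.ofBijective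
    (fun s : {s : Finset ι // 2 * #s = Fintype.card ι} =>
      (⟨signVector s.1, ?_, ?_⟩ : zeroSumWords ι ({1, -1} : Set ℤ))) ⟨?_, ?_⟩)).symm
  · exact range_signVector.subset (Set.mem_range_self s.1)
  · rw [sum_signVector]
    have := s.2
    omega
  · intro s t h
    exact Subtype.ext (signVector_injective (congrArg Subtype.val h))
  · rintro ⟨ε, hε, hε0⟩
    obtain ⟨s, rfl⟩ : ε ∈ Set.range signVector := range_signVector.symm.subset hε
    refine ⟨⟨s, ?_⟩, rfl⟩
    rw [sum_signVector] at hε0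
    omega

end SignVector

def sumDiff : ℤ × ℤ →+ ℤ × ℤ :=
  (AddMonoidHom.fst ℤ ℤ + AddMonoidHom.snd ℤ ℤ).prod (AddMonoidHom.fst ℤ ℤ - AddMonoidHom.snd ℤ ℤ)

theorem sumDiff_apply (p : ℤ × ℤ) : sumDiff p = (p.1 + p.2, p.1 - p.2) := rfl

theorem sumDiff_injective : Function.Injective sumDiff := by
  rintro ⟨a, b⟩ ⟨c, d⟩ h
  simp only [sumDiff_apply, Prod.ext_iff] at h ⊢
  omega

theorem sumDiff_image_steps :
    sumDiff '' {(1, 0), (-1, 0), (0, 1), (0, -1)} = ({1, -1} : Set ℤ) ×ˢ ({1, -1} : Set ℤ) := by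
  ext ⟨x, y⟩
  simp only [Set.image_insert_eq, Set.image_singleton, sumDiff_apply, Set.mem_insert_iff,
    Set.mem_singleton_iff, Set.mem_prod, Prod.mk.injEq]
  omega

/-- The number of sequences of length `n` with entries in
`{(1,0), (-1,0), (0,1), (0,-1)} ⊆ ℤ × ℤ` summing to `(0,0)` is `(n choose n/2)²`
for even `n`, and `0` for odd `n`. -/
theorem count_trivial_words_Z2 (n : ℕ) :
    Nat.card {w : Fin n → ℤ × ℤ //
        (∀ i, w i ∈ ({(1, 0), (-1, 0), (0, 1), (0, -1)} : Set (ℤ × ℤ))) ∧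
        ∑ i, w i = 0} =
      if Even n then n.choose (n / 2) ^ 2 else 0 := by
  change Nat.card (zeroSumWords (Fin n) {(1, 0), (-1, 0), (0, 1), (0, -1)}) = _
  rw [← card_zeroSumWords_image sumDiff_injective, sumDiff_image_steps,
    card_zeroSumWords_prod, card_zeroSumWords_signs, Fintype.card_fin]
  split_ifs <;> simp [sq]
end

section
/- For every integer N ≥ 1, in the Baumslag–Solitar group BS(N,N), limsup_{n→∞} (g_n)^{1/n} = limsup_{n→∞} (g_{n,0})^{1/n}, where the n-th roots are real n-th roots. Equivalently, the power series G(z;1) = Σ_{n≥0} g_n z^n and [q⁰]G(z;q) = Σ_{n≥0} g_{n,0} z^n have the same radius of convergence. -/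
noncomputable section

open LaurentPolynomial PowerSeries

/-- The single relator `a^N b a^{-M} b^{-1}` of the Baumslag–Solitar group. -/
def bsRels (N M : ℕ) : Set (FreeGroup (Fin 2)) :=
  {FreeGroup.of 0 ^ N * FreeGroup.of 1 * (FreeGroup.of 0 ^ M)⁻¹ * (FreeGroup.of 1)⁻¹}

/-- The Baumslag–Solitar group `BS(N,M)`. -/
abbrev BSGroup (N M : ℕ) := PresentedGroup (bsRels N M)

/-- The image of the generator `a` in `BS(N,M)`. -/
def bsA (N M : ℕ) : BSGroup N M := PresentedGroup.of 0

/-- The image of the generator `b` in `BS(N,M)`. -/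
def bsB (N M : ℕ) : BSGroup N M := PresentedGroup.of 1

/-- The alphabet `{a, a⁻¹, b, b⁻¹}`: a generator index together with a sign. -/
abbrev BSLetter : Type := Fin 2 × Bool

/-- The evaluation of a letter in `BS(N,M)`. -/
def letterVal (N M : ℕ) (p : BSLetter) : BSGroup N M :=
  if p.2 then PresentedGroup.of p.1 else (PresentedGroup.of p.1)⁻¹

/-- The evaluation in `BS(N,M)` of the prefix of length `m` of a word. -/
def prefixVal (N M : ℕ) {n : ℕ} (w : Fin n → BSLetter) (m : ℕ) : BSGroup N M :=
  (((List.ofFn w).take m).map (letterVal N M)).prod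

/-- The evaluation of a word of length `n` in `BS(N,M)`. -/
def wordVal (N M : ℕ) {n : ℕ} (w : Fin n → BSLetter) : BSGroup N M :=
  ((List.ofFn w).map (letterVal N M)).prod

/-- `g_{n,k}`: the number of words of length `n` evaluating to `a^k` in `BS(N,M)`. -/
def gCount (N M n : ℕ) (k : ℤ) : ℕ :=
  Nat.card {w : Fin n → BSLetter // wordVal N M w = bsA N M ^ k}

/-- `g_n`: the number of words of length `n` whose evaluation lies in `⟨a⟩`. -/
def gTot (N M n : ℕ) : ℕ :=
  Nat.card {w : Fin n → BSLetter // ∃ k : ℤ, wordVal N M w = bsA N M ^ k}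

/-- Membership in `𝓛`: the evaluation lies in `⟨a⟩` and no proper prefix evaluates
into the coset `b⁻¹⟨a⟩`. -/
def memL (N M : ℕ) {n : ℕ} (w : Fin n → BSLetter) : Prop :=
  (∃ k : ℤ, wordVal N M w = bsA N M ^ k) ∧
    ∀ m < n, ¬ ∃ j : ℤ, prefixVal N M w m = (bsB N M)⁻¹ * bsA N M ^ j

/-- Membership in `𝓚`: the evaluation lies in `⟨a⟩` and no proper prefix evaluates
into the coset `b⟨a⟩`. -/
def memK (N M : ℕ) {n : ℕ} (w : Fin n → BSLetter) : Prop :=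
  (∃ k : ℤ, wordVal N M w = bsA N M ^ k) ∧
    ∀ m < n, ¬ ∃ j : ℤ, prefixVal N M w m = bsB N M * bsA N M ^ j

/-- `ℓ_{n,k}`: the number of words in `𝓛` of length `n` evaluating to `a^k`. -/
def lCount (N M n : ℕ) (k : ℤ) : ℕ :=
  Nat.card {w : Fin n → BSLetter // memL N M w ∧ wordVal N M w = bsA N M ^ k}

/-- `κ_{n,k}`: the number of words in `𝓚` of length `n` evaluating to `a^k`. -/
def kCount (N M n : ℕ) (k : ℤ) : ℕ :=
  Nat.card {w : Fin n → BSLetter // memK N M w ∧ wordVal N M w = bsA N M ^ k}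

/-- The number of words of length `n` in `𝓛`. -/
def lTot (N M n : ℕ) : ℕ := Nat.card {w : Fin n → BSLetter // memL N M w}

/-- The number of words of length `n` in `𝓚`. -/
def kTot (N M n : ℕ) : ℕ := Nat.card {w : Fin n → BSLetter // memK N M w}

/-- Package counting data `f n k` into the Laurent polynomial `Σ_k f n k · q^k`
(the counts vanish for `|k| > n`). -/
def coeffPoly (f : ℕ → ℤ → ℕ) (n : ℕ) : LaurentPolynomial ℚ :=
  ∑ k ∈ Finset.Icc (-(n : ℤ)) (n : ℤ), LaurentPolynomial.C (f n k : ℚ) * T k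

/-- The generating function `G(z;q)`. -/
def Gser (N M : ℕ) : PowerSeries (LaurentPolynomial ℚ) := PowerSeries.mk (coeffPoly (gCount N M))

/-- The generating function `L(z;q)`. -/
def Lser (N M : ℕ) : PowerSeries (LaurentPolynomial ℚ) := PowerSeries.mk (coeffPoly (lCount N M))

/-- The generating function `K(z;q)`. -/
def Kser (N M : ℕ) : PowerSeries (LaurentPolynomial ℚ) := PowerSeries.mk (coeffPoly (kCount N M))

/-- The `ℚ`-linear operator `Φ_{d,e}` on `ℚ[q,q⁻¹]`: maps `q^{dj} ↦ q^{ej}` and kills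
`q^k` when `d ∤ k`. -/
def Phi (d e : ℕ) (p : LaurentPolynomial ℚ) : LaurentPolynomial ℚ :=
  Finsupp.sum p.coeff fun k c => if (d : ℤ) ∣ k then LaurentPolynomial.C c * T ((e : ℤ) * (k / d)) else 0

/-- `Φ_{d,e}` applied coefficientwise to power series. -/
def PhiSer (d e : ℕ) (f : PowerSeries (LaurentPolynomial ℚ)) : PowerSeries (LaurentPolynomial ℚ) :=
  PowerSeries.mk fun n => Phi d e (PowerSeries.coeff n f)

/-- The Laurent polynomial `Q = q + q⁻¹`. -/
def Qpoly : LaurentPolynomial ℚ := T 1 + T (-1)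

end

/-!
In `BS(N,N)` the exponent sum of `a` is a homomorphism to `ℤ` (the relator has exponent sum
`N - N = 0`), so a word of length `n` evaluating into `⟨a⟩` evaluates to some `a^k` with
`|k| ≤ n`, and `g_n ≤ ∑_{|k| ≤ n} g_{n,k}`. Reversing and inverting words gives
`g_{n,-k} = g_{n,k}`, and concatenating a word for `a^k` with one for `a^{-k}` gives a word for
`1`; hence `g_{n,k}^2 ≤ g_{2n,0}` and `g_n ≤ (2n+1) √g_{2n,0}`. After taking `n`-th roots the
factor `2n+1` disappears in the limit and `g_{2n,0}^{1/(2n)}` runs along a subsequence of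
`g_{m,0}^{1/m}`. The reverse inequality comes from `g_{n,0} ≤ g_n`.
-/

open Filter Topology

theorem rpow_one_div_le_of_le_pow {x C : ℝ} {n : ℕ} (hx : 0 ≤ x) (hC : 1 ≤ C) (h : x ≤ C ^ n) :
    x ^ (1 / (n : ℝ)) ≤ C := by
  rcases eq_or_ne n 0 with rfl | hn
  · simpa using hC
  calc x ^ (1 / (n : ℝ)) ≤ (C ^ n) ^ (1 / (n : ℝ)) := by gcongr
    _ = C := by rw [one_div, Real.pow_rpow_inv_natCast (by linarith) hn]

theorem limsup_rpow_one_div_le_of_le_mul_sqrt {p u v : ℕ → ℝ} (hp₀ : ∀ n, 0 ≤ p n)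
    (hp : Tendsto (fun n => p n ^ (1 / (n : ℝ))) atTop (𝓝 1)) (hu : ∀ n, 0 ≤ u n)
    (hv : ∀ n, 0 ≤ v n) (hv_bdd : IsBoundedUnder (· ≤ ·) atTop fun n => v n ^ (1 / (n : ℝ)))
    (h : ∀ n, u n ≤ p n * √(v (2 * n))) :
    limsup (fun n => u n ^ (1 / (n : ℝ))) atTop ≤ limsup (fun n => v n ^ (1 / (n : ℝ))) atTop := by
  set b : ℕ → ℝ := fun n => v n ^ (1 / (n : ℝ))
  have hb₀ : ∀ n, 0 ≤ b n := fun n => Real.rpow_nonneg (hv n) _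
  have h2 : Tendsto (2 * ·) atTop atTop := tendsto_id.const_mul_atTop' two_pos
  have hb₂_bdd : IsBoundedUnder (· ≤ ·) atTop (b ∘ (2 * ·)) := h2.isBoundedUnder_comp hv_bdd
  have hpoint : ∀ n, u n ^ (1 / (n : ℝ)) ≤ p n ^ (1 / (n : ℝ)) * (b ∘ (2 * ·)) n := by
    intro n
    calc u n ^ (1 / (n : ℝ)) ≤ (p n * √(v (2 * n))) ^ (1 / (n : ℝ)) := by gcongr; exacts [hu n, h n]
      _ = p n ^ (1 / (n : ℝ)) * b (2 * n) := by
        rw [Real.mul_rpow (hp₀ n) (Real.sqrt_nonneg _), Real.sqrt_eq_rpow,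
          ← Real.rpow_mul (hv _)]
        simp only [b, Nat.cast_mul, Nat.cast_ofNat, one_div_mul_one_div]
  calc limsup (fun n => u n ^ (1 / (n : ℝ))) atTop
      ≤ limsup ((fun n => p n ^ (1 / (n : ℝ))) * (b ∘ (2 * ·))) atTop :=
        limsup_le_limsup (.of_forall hpoint)
          (isCoboundedUnder_le_of_le atTop fun n => Real.rpow_nonneg (hu n) _)
          (isBoundedUnder_le_mul_of_nonneg (.of_forall fun n => Real.rpow_nonneg (hp₀ n) _)
            hp.isBoundedUnder_le (.of_forall fun n => hb₀ _) hb₂_bdd)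
    _ ≤ limsup (fun n => p n ^ (1 / (n : ℝ))) atTop * limsup (b ∘ (2 * ·)) atTop :=
        limsup_mul_le (.of_forall fun n => Real.rpow_nonneg (hp₀ n) _) hp.isBoundedUnder_le
          (.of_forall fun n => hb₀ _) hb₂_bdd
    _ = limsup (b ∘ (2 * ·)) atTop := by rw [hp.limsup_eq, one_mul]
    _ ≤ limsup b atTop :=
        h2.limsup_comp_le_limsup (isCoboundedUnder_le_of_le _ fun n => hb₀ _) hv_bdd

theorem tendsto_two_mul_add_one_rpow_one_div :
    Tendsto (fun n : ℕ => (2 * n + 1 : ℝ) ^ (1 / (n : ℝ))) atTop (𝓝 1) := by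
  have hx : Tendsto (fun n : ℕ => (2 * n + 1 : ℝ)) atTop atTop :=
    tendsto_atTop_add_const_right _ _ (tendsto_natCast_atTop_atTop.const_mul_atTop two_pos)
  refine ((tendsto_rpow_div_mul_add 2 1 (-1) zero_ne_one).comp hx).congr fun n => ?_
  simp only [Function.comp_apply, one_mul, add_neg_cancel_right]
  rw [div_mul_eq_div_div, div_self two_ne_zero]

theorem List.ofFn_comp_rev {α : Type*} {n : ℕ} (f : Fin n → α) :
    List.ofFn (f ∘ Fin.rev) = (List.ofFn f).reverse := by
  apply List.ext_getElem (by simp)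
  intro i h₁ _
  simp only [List.getElem_ofFn, List.getElem_reverse, List.length_ofFn, Function.comp_apply]
  congr 1
  ext
  simp only [List.length_ofFn] at h₁
  simp only [Fin.val_rev]
  omega

section Words

variable {N M : ℕ}

noncomputable def wordCount (N M n : ℕ) (g : BSGroup N M) : ℕ :=
  Nat.card {w : Fin n → BSLetter // wordVal N M w = g}

theorem wordVal_append {m n : ℕ} (w : Fin m → BSLetter) (v : Fin n → BSLetter) :
    wordVal N M (Fin.append w v) = wordVal N M w * wordVal N M v := by
  rw [wordVal, List.ofFn_fin_append, List.map_append, List.prod_append, wordVal, wordVal]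

def letterInv (p : BSLetter) : BSLetter := (p.1, !p.2)

theorem letterInv_involutive : Function.Involutive letterInv := fun p => by
  simp [letterInv]

theorem letterVal_letterInv (p : BSLetter) : letterVal N M (letterInv p) = (letterVal N M p)⁻¹ := by
  obtain ⟨i, _ | _⟩ := p <;> simp [letterVal, letterInv]

def wordInv {n : ℕ} (w : Fin n → BSLetter) : Fin n → BSLetter := letterInv ∘ w ∘ Fin.rev

theorem wordInv_involutive (n : ℕ) : Function.Involutive (wordInv (n := n)) := fun w => by
  funext i
  simp [wordInv, letterInv_involutive (w _)]

theorem wordVal_wordInv {n : ℕ} (w : Fin n → BSLetter) :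
    wordVal N M (wordInv w) = (wordVal N M w)⁻¹ := by
  rw [wordInv, wordVal, wordVal, List.prod_inv_reverse, ← Function.comp_assoc, List.ofFn_comp_rev]
  simp [List.map_reverse, List.map_ofFn, Function.comp_def, letterVal_letterInv]

theorem wordCount_inv (n : ℕ) (g : BSGroup N M) : wordCount N M n g⁻¹ = wordCount N M n g :=
  Nat.card_congr <| (wordInv_involutive n).toPerm.subtypeEquiv fun w => by
    rw [Function.Involutive.coe_toPerm, wordVal_wordInv, inv_eq_iff_eq_inv]

theorem wordCount_mul_wordCount_le (m n : ℕ) (g h : BSGroup N M) :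
    wordCount N M m g * wordCount N M n h ≤ wordCount N M (m + n) (g * h) := by
  rw [wordCount, wordCount, ← Nat.card_prod]
  refine Nat.card_le_card_of_injective
    (fun p => ⟨Fin.append p.1.1 p.2.1, by rw [wordVal_append, p.1.2, p.2.2]⟩) ?_
  rintro ⟨⟨w, _⟩, ⟨v, _⟩⟩ ⟨⟨w', _⟩, ⟨v', _⟩⟩ hwv
  obtain ⟨rfl, rfl⟩ := Prod.ext_iff.mp <|
    (Fin.appendEquiv m n).injective (a₁ := (w, v)) (a₂ := (w', v')) (congrArg Subtype.val hwv)
  rfl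

theorem sq_wordCount_le (n : ℕ) (g : BSGroup N M) :
    wordCount N M n g ^ 2 ≤ wordCount N M (2 * n) 1 :=
  calc wordCount N M n g ^ 2 = wordCount N M n g * wordCount N M n g⁻¹ := by
        rw [sq, wordCount_inv]
    _ ≤ wordCount N M (n + n) (g * g⁻¹) := wordCount_mul_wordCount_le n n g g⁻¹
    _ = wordCount N M (2 * n) 1 := by rw [two_mul, mul_inv_cancel]

theorem gTot_le_four_pow (n : ℕ) : gTot N M n ≤ 4 ^ n :=
  calc gTot N M n ≤ Nat.card (Fin n → BSLetter) := Finite.card_subtype_le _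
    _ = 4 ^ n := by simp [Nat.card_eq_fintype_card]

theorem gCount_zero_le_gTot (n : ℕ) : gCount N M n 0 ≤ gTot N M n :=
  Nat.card_le_card_of_injective (fun w => ⟨w.1, 0, w.2⟩) fun _ _ h =>
    Subtype.ext (Subtype.mk.inj h)

end Words

noncomputable def expSum (N : ℕ) : BSGroup N N →* Multiplicative ℤ :=
  PresentedGroup.toGroup (f := ![Multiplicative.ofAdd 1, 1]) <| by
    rintro r rfl
    simp

theorem expSum_zpow_bsA (N : ℕ) (k : ℤ) : expSum N (bsA N N ^ k) = Multiplicative.ofAdd k := by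
  simp [expSum, bsA, PresentedGroup.toGroup.of, ← ofAdd_zsmul]

theorem abs_expSum_letterVal_le (N : ℕ) (p : BSLetter) :
    |(expSum N (letterVal N N p)).toAdd| ≤ 1 := by
  obtain ⟨i, _ | _⟩ := p <;> fin_cases i <;> simp [expSum, letterVal, PresentedGroup.toGroup.of]

theorem abs_expSum_prod_letterVal_le (N : ℕ) (l : List BSLetter) :
    |(expSum N (l.map (letterVal N N)).prod).toAdd| ≤ l.length := by
  induction l with
  | nil => simp
  | cons p l ih =>
    simp only [List.map_cons, List.prod_cons, map_mul, toAdd_mul, List.length_cons]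
    push_cast
    exact (abs_add_le _ _).trans (by linarith [abs_expSum_letterVal_le N p])

theorem abs_expSum_wordVal_le (N : ℕ) {n : ℕ} (w : Fin n → BSLetter) :
    |(expSum N (wordVal N N w)).toAdd| ≤ n := by
  simpa only [wordVal, List.length_ofFn] using abs_expSum_prod_letterVal_le N (List.ofFn w)

theorem abs_le_of_wordVal_eq_zpow (N : ℕ) {n : ℕ} {w : Fin n → BSLetter} {k : ℤ}
    (h : wordVal N N w = bsA N N ^ k) : |k| ≤ n := by
  simpa [h, expSum_zpow_bsA] using abs_expSum_wordVal_le N w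

theorem gTot_le_sum_gCount (N n : ℕ) :
    gTot N N n ≤ ∑ k ∈ Finset.Icc (-(n : ℤ)) n, gCount N N n k := by
  classical
  simp only [gTot, gCount, Nat.card_eq_fintype_card, Fintype.card_subtype]
  refine (Finset.card_le_card fun w hw => ?_).trans Finset.card_biUnion_le
  obtain ⟨k, hk⟩ := (Finset.mem_filter.mp hw).2
  have hk_le := abs_le_of_wordVal_eq_zpow N hk
  exact Finset.mem_biUnion.mpr ⟨k, Finset.mem_Icc.mpr (abs_le.mp hk_le), by simpa using hk⟩

theorem sq_gCount_le (N n : ℕ) (k : ℤ) : gCount N N n k ^ 2 ≤ gCount N N (2 * n) 0 := by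
  have h := sq_wordCount_le (N := N) (M := N) n (bsA N N ^ k)
  rwa [← zpow_zero (bsA N N)] at h

theorem gTot_le_mul_sqrt (N n : ℕ) :
    (gTot N N n : ℝ) ≤ (2 * n + 1) * √(gCount N N (2 * n) 0) :=
  calc (gTot N N n : ℝ) ≤ ∑ k ∈ Finset.Icc (-(n : ℤ)) n, (gCount N N n k : ℝ) := by
        exact_mod_cast gTot_le_sum_gCount N n
    _ ≤ ∑ _k ∈ Finset.Icc (-(n : ℤ)) n, √(gCount N N (2 * n) 0) :=
        Finset.sum_le_sum fun k _ => Real.le_sqrt_of_sq_le (by exact_mod_cast sq_gCount_le N n k)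
    _ = (2 * n + 1) * √(gCount N N (2 * n) 0) := by
        rw [Finset.sum_const, Int.card_Icc, nsmul_eq_mul]
        congr 1
        rw [show ((n : ℤ) + 1 - -(n : ℤ)).toNat = 2 * n + 1 by omega]
        push_cast
        rfl

open Filter in
theorem bsNN_limsup_g_eq_limsup_g0_general (N : ℕ) :
    (Filter.atTop.limsup fun n : ℕ => (gTot N N n : ℝ) ^ (1 / (n : ℝ))) =
      Filter.atTop.limsup fun n : ℕ => (gCount N N n 0 : ℝ) ^ (1 / (n : ℝ)) := by
  have hroot_le_four : ∀ n {x : ℕ}, x ≤ gTot N N n → (x : ℝ) ^ (1 / (n : ℝ)) ≤ 4 :=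
    fun n x hx => rpow_one_div_le_of_le_pow (Nat.cast_nonneg x) (by norm_num) <| by
      exact_mod_cast hx.trans (gTot_le_four_pow n)
  apply le_antisymm
  · exact limsup_rpow_one_div_le_of_le_mul_sqrt (fun n => by positivity)
      tendsto_two_mul_add_one_rpow_one_div (fun n => Nat.cast_nonneg _) (fun n => Nat.cast_nonneg _)
      (isBoundedUnder_of ⟨4, fun n => hroot_le_four n (gCount_zero_le_gTot n)⟩) (gTot_le_mul_sqrt N)
  · exact limsup_le_limsup (.of_forall fun n => Real.rpow_le_rpow (Nat.cast_nonneg _)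
        (by exact_mod_cast gCount_zero_le_gTot n) (by positivity))
      (isCoboundedUnder_le_of_le _ fun n => by positivity)
      (isBoundedUnder_of ⟨4, fun n => hroot_le_four n le_rfl⟩)

open Filter in
/-- For `BS(N,N)`, the growth rate of the number `g_n` of words of length `n`
evaluating into `⟨a⟩` equals the growth rate of the number `g_{n,0}` of words of
length `n` evaluating to the identity. -/
theorem bsNN_limsup_g_eq_limsup_g0 (N : ℕ) (hN : 1 ≤ N) :
    (Filter.atTop.limsup fun n : ℕ => (gTot N N n : ℝ) ^ (1 / (n : ℝ))) =
      Filter.atTop.limsup fun n : ℕ => (gCount N N n 0 : ℝ) ^ (1 / (n : ℝ)) :=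
  bsNN_limsup_g_eq_limsup_g0_general N
end

section
/- Let t_n denote the number of words of length n over the alphabet {a, a⁻¹, b, b⁻¹} whose product in the free group F(a,b) on two generators is the identity. Then the formal power series T(z) = Σ_{n≥0} t_n z^n ∈ ℚ[[z]] satisfies the quadratic equation (1 − 16z²)·T² + 2T − 3 = 0; equivalently, T(z) = 3/(1 + 2√(1 − 12z²)). -/
noncomputable section

/-- The evaluation of a letter from the alphabet `{a, a⁻¹, b, b⁻¹}` in the free
group `F(a,b)` on two generators. -/
def freeLetterVal (p : Fin 2 × Bool) : FreeGroup (Fin 2) :=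
  if p.2 then FreeGroup.of p.1 else (FreeGroup.of p.1)⁻¹

/-- `t_n`: the number of words of length `n` over `{a, a⁻¹, b, b⁻¹}` whose product
in the free group `F(a,b)` is the identity. -/
def tCount (n : ℕ) : ℕ :=
  Nat.card {w : Fin n → Fin 2 × Bool // ((List.ofFn w).map freeLetterVal).prod = 1}

/-!
Words with trivial product are the closed walks at `1` in the Cayley graph of the free group on
`r` generators, a `2r`-regular tree. Cutting a closed walk at its last return to `1` writes it
uniquely as a closed walk followed by an excursion `x⁻¹ · m · x`, where `m` is a closed walk at
`1` that never visits the neighbour `x⁻¹`. By the symmetry of the tree the number of such `m`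
does not depend on `x`, and the same cut applied to `m` gives a second equation; eliminating its
series leaves a quadratic for the series of closed walks.
-/

namespace FreeGroupWords

open FreeGroup PowerSeries
open Finset.HasAntidiagonal (antidiagonal mem_antidiagonal)

variable {α : Type*}

def invLetter (x : α × Bool) : α × Bool := (x.1, !x.2)

@[simp] lemma invLetter_invLetter (x : α × Bool) : invLetter (invLetter x) = x := by
  simp [invLetter]

lemma mk_singleton_inv (x : α × Bool) : (mk [x])⁻¹ = mk [invLetter x] := by
  simp [inv_mk, invRev, invLetter]

lemma mk_cons (x : α × Bool) (w : List (α × Bool)) : mk (x :: w) = mk [x] * mk w := by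
  rw [mul_mk, List.singleton_append]

lemma mk_append_singleton_eq_one_iff {u : List (α × Bool)} {x : α × Bool} :
    mk (u ++ [x]) = 1 ↔ mk u = mk [invLetter x] := by
  rw [← mul_mk, mul_eq_one_iff_eq_inv, mk_singleton_inv]

lemma prod_map_mk_singleton (w : List (α × Bool)) : (w.map fun x => mk [x]).prod = mk w := by
  induction w with
  | nil => rfl
  | cons x w ih => rw [List.map_cons, List.prod_cons, ih, ← mk_cons]

lemma mk_singleton_ne_one (x : α × Bool) : mk [x] ≠ 1 := by
  obtain ⟨i, _ | _⟩ := x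
  · exact inv_ne_one.mpr (of_ne_one i)
  · exact of_ne_one i

/-- Read from the right, the suffix products of a word `w` form a walk in the Cayley tree of the
free group (edges `g — mk [x] * g`); `Avoids E w` says that this walk never visits the neighbours
`mk [e]`, `e ∈ E`, of the identity. -/
def Avoids (E : Finset (α × Bool)) (w : List (α × Bool)) : Prop :=
  ∀ s, s <:+ w → ∀ e ∈ E, mk s ≠ mk [e]

def IsLoop (E : Finset (α × Bool)) (w : List (α × Bool)) : Prop :=
  mk w = 1 ∧ Avoids E w

def IsMinimalLoop (w : List (α × Bool)) : Prop :=
  mk w = 1 ∧ w ≠ [] ∧ ∀ s, s <:+ w → s ≠ [] → mk s = 1 → s = w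

variable {E : Finset (α × Bool)} {u v w : List (α × Bool)} {x : α × Bool}

lemma Avoids.of_suffix (h : Avoids E w) (hvw : v <:+ w) : Avoids E v :=
  fun s hs => h s (hs.trans hvw)

lemma mk_ne_mk_singleton_of_eq_one (hw : mk w = 1) (e : α × Bool) : mk w ≠ mk [e] :=
  hw ▸ (mk_singleton_ne_one e).symm

lemma isLoop_nil (E : Finset (α × Bool)) : IsLoop E [] :=
  ⟨rfl, fun _ hs e _ => mk_ne_mk_singleton_of_eq_one (List.eq_nil_of_suffix_nil hs ▸ rfl) e⟩

lemma isLoop_empty_iff : IsLoop ∅ w ↔ mk w = 1 := by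
  simp [IsLoop, Avoids]

lemma avoids_append_iff (hv : mk v = 1) : Avoids E (u ++ v) ↔ Avoids E u ∧ Avoids E v := by
  refine ⟨fun h => ⟨fun s hs => ?_, h.of_suffix (List.suffix_append u v)⟩,
    fun ⟨hu, hv'⟩ s hs => ?_⟩
  · simpa [← mul_mk, hv] using h (s ++ v) (List.suffix_append_self_iff.mpr hs)
  · rcases List.suffix_or_suffix_of_suffix hs (List.suffix_append u v) with hsv | ⟨t, rfl⟩
    · exact hv' s hsv
    · simpa [← mul_mk, hv] using hu t (List.suffix_append_self_iff.mp hs)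

theorem exists_suffix_isMinimalLoop (hw : mk w = 1) (hne : w ≠ []) :
    ∃ v, v <:+ w ∧ IsMinimalLoop v := by
  induction hn : w.length using Nat.strong_induction_on generalizing w with
  | _ n ih =>
  by_cases hmin : ∀ s, s <:+ w → s ≠ [] → mk s = 1 → s = w
  · exact ⟨w, List.suffix_rfl, hw, hne, hmin⟩
  push Not at hmin
  obtain ⟨s, hs, hsne, hs1, hsw⟩ := hmin
  have hlt : s.length < n := hn ▸ lt_of_le_of_ne hs.length_le (mt hs.eq_of_length hsw)
  obtain ⟨v, hvs, hv⟩ := ih _ hlt hs1 hsne rfl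
  exact ⟨v, hvs.trans hs, hv⟩

theorem IsMinimalLoop.append_inj {u' v' : List (α × Bool)} (hv : IsMinimalLoop v)
    (hv' : IsMinimalLoop v') (h : u ++ v = u' ++ v') : u = u' ∧ v = v' := by
  obtain rfl : v = v' := by
    rcases List.suffix_or_suffix_of_suffix (List.suffix_append u v)
      (h ▸ List.suffix_append u' v') with hs | hs
    · exact hv'.2.2 v hs hv.2.1 hv.1
    · exact (hv.2.2 v' hs hv'.2.1 hv'.1).symm
  exact ⟨List.append_cancel_right h, rfl⟩

theorem isMinimalLoop_cons_append (hw : IsLoop {invLetter x} w) :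
    IsMinimalLoop (invLetter x :: (w ++ [x])) := by
  refine ⟨?_, List.cons_ne_nil _ _, fun s hs hne hs1 => ?_⟩
  · rw [mk_cons, ← mul_mk, hw.1, one_mul, ← mk_singleton_inv, inv_mul_cancel]
  rcases List.suffix_cons_iff.mp hs with rfl | hs
  · rfl
  rcases List.suffix_concat_iff.mp hs with rfl | ⟨t, rfl, ht⟩
  · exact absurd rfl hne
  · exact absurd (mk_append_singleton_eq_one_iff.mp hs1)
      (hw.2 t ht _ (Finset.mem_singleton_self _))

section Counting

abbrev Words {β : Type*} (P : List β → Prop) (n : ℕ) : Type _ :=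
  {w : List β // w.length = n ∧ P w}

def wordCount {β : Type*} (P : List β → Prop) (n : ℕ) : ℕ := Nat.card (Words P n)

instance {β : Type*} [Finite β] (P : List β → Prop) (n : ℕ) : Finite (Words P n) :=
  ((List.finite_length_eq β n).subset fun _ hw => hw.1).to_subtype

def appendLoops (E : Finset (α × Bool)) (n : ℕ) :
    (Σ p : antidiagonal n,
      Words (fun w => IsMinimalLoop w ∧ Avoids E w) p.1.1 × Words (IsLoop E) p.1.2) →
    Words (IsLoop E) n :=
  fun ⟨⟨_, hp⟩, v, u⟩ =>
    ⟨u.1 ++ v.1,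
      by rw [List.length_append, u.2.1, v.2.1, add_comm, mem_antidiagonal.mp hp],
      ⟨by rw [← mul_mk, u.2.2.1, v.2.2.1.1, one_mul],
        (avoids_append_iff v.2.2.1.1).mpr ⟨u.2.2.2, v.2.2.2⟩⟩⟩

lemma appendLoops_injective (E : Finset (α × Bool)) (n : ℕ) :
    Function.Injective (appendLoops E n) := by
  rintro ⟨⟨p, _⟩, ⟨v, hvl, hv⟩, ⟨u, hul, _⟩⟩ ⟨⟨p', _⟩, ⟨v', hvl', hv'⟩, ⟨u', hul', _⟩⟩
    h
  obtain ⟨rfl, rfl⟩ := hv.1.append_inj hv'.1 (congrArg Subtype.val h)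
  obtain rfl : p = p' := Prod.ext (hvl.symm.trans hvl') (hul.symm.trans hul')
  rfl

lemma appendLoops_surjective (E : Finset (α × Bool)) {n : ℕ} (hn : n ≠ 0) :
    Function.Surjective (appendLoops E n) := by
  rintro ⟨w, rfl, hw, hwE⟩
  obtain ⟨v, ⟨u, rfl⟩, hv⟩ :=
    exists_suffix_isMinimalLoop hw (List.ne_nil_of_length_pos (Nat.pos_of_ne_zero hn))
  have hu : mk u = 1 := by rwa [← mul_mk, hv.1, mul_one] at hw
  obtain ⟨huE, hvE⟩ := (avoids_append_iff hv.1).mp hwE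
  exact ⟨⟨⟨(v.length, u.length), mem_antidiagonal.mpr (by simp [add_comm])⟩,
    ⟨v, rfl, hv, hvE⟩, ⟨u, rfl, hu, huE⟩⟩, rfl⟩

theorem wordCount_isLoop [Finite α] (E : Finset (α × Bool)) (n : ℕ) :
    wordCount (IsLoop E) n = (if n = 0 then 1 else 0) +
      ∑ p ∈ antidiagonal n,
        wordCount (fun w => IsMinimalLoop w ∧ Avoids E w) p.1 * wordCount (IsLoop E) p.2 := by
  rcases eq_or_ne n 0 with rfl | hn
  · have : Unique (Words (IsLoop E) 0) :=
      ⟨⟨⟨[], rfl, isLoop_nil E⟩⟩,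
        fun w => Subtype.ext (List.eq_nil_of_length_eq_zero w.2.1)⟩
    have : IsEmpty (Words (fun w => IsMinimalLoop w ∧ Avoids E w) 0) :=
      ⟨fun w => w.2.2.1.2.1 (List.eq_nil_of_length_eq_zero w.2.1)⟩
    simp [wordCount]
  rw [if_neg hn, zero_add, wordCount,
    ← Nat.card_congr
      (Equiv.ofBijective _ ⟨appendLoops_injective E n, appendLoops_surjective E hn⟩),
    Nat.card_sigma, ← Finset.sum_coe_sort (antidiagonal n)]
  simp only [Nat.card_prod, wordCount]

end Counting

section Reduced

variable [DecidableEq α]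

lemma toWord_mk_singleton (x : α × Bool) : (mk [x]).toWord = [x] := by
  rw [toWord_mk, reduce_singleton]

/-- Left multiplication by a letter cancels at most the first letter of a reduced word, so it
keeps the last letter unless it produces the identity. -/
lemma getLast?_toWord_mk_singleton_mul {g : FreeGroup α} (x : α × Bool) (hg : g ≠ 1)
    (hxg : mk [x] * g ≠ 1) : (mk [x] * g).toWord.getLast? = g.toWord.getLast? := by
  have hword : (mk [x] * g).toWord = reduce (x :: g.toWord) := by
    rw [← mk_toWord (x := g), mul_mk, toWord_mk, mk_toWord]; rfl
  obtain ⟨y, ys, hy⟩ := List.exists_cons_of_ne_nil (mt toWord_eq_nil_iff.mp hg)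
  rw [hword, reduce.cons, reduce_toWord, hy]
  dsimp only
  split_ifs with hcancel
  · obtain _ | ⟨z, zs⟩ := ys
    · refine absurd ?_ hxg
      rw [← toWord_eq_nil_iff, hword, reduce.cons, reduce_toWord, hy]
      simp [hcancel]
    · rw [List.getLast?_cons_cons]
  · rw [List.getLast?_cons_cons]

/-- The walk of suffix products of `w ++ [x]` starts in the branch of the tree behind `mk [x]`;
as long as it avoids the identity it stays there, so its reduced words keep ending in `x`. -/
lemma getLast?_toWord_mk_append_singleton (h : Avoids {invLetter x} w) :
    (mk (w ++ [x])).toWord.getLast? = some x := by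
  induction w with
  | nil => rw [List.nil_append, toWord_mk_singleton, List.getLast?_singleton]
  | cons y w ih =>
    have hlast := ih (h.of_suffix (List.suffix_cons y w))
    have hne : mk (w ++ [x]) ≠ 1 := by
      rw [Ne, ← toWord_eq_nil_iff]; rintro hnil; simp [hnil] at hlast
    have hyne : mk [y] * mk (w ++ [x]) ≠ 1 := by
      rw [← mk_cons, ← List.cons_append, Ne, mk_append_singleton_eq_one_iff]
      exact h _ List.suffix_rfl _ (Finset.mem_singleton_self _)
    rw [List.cons_append, mk_cons, getLast?_toWord_mk_singleton_mul y hne hyne, hlast]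

lemma eq_of_mk_append_singleton_eq (h : Avoids {invLetter x} w) {e : α × Bool}
    (he : mk (w ++ [x]) = mk [e]) : e = x := by
  simpa [he, toWord_mk_singleton] using getLast?_toWord_mk_append_singleton h

theorem avoids_cons_append_iff (hw : IsLoop {invLetter x} w) :
    Avoids E (invLetter x :: (w ++ [x])) ↔ x ∉ E := by
  refine ⟨fun h hx => h [x] ?_ x hx rfl, fun hx s hs e he => ?_⟩
  · exact (List.suffix_append w [x]).trans (List.suffix_cons _ _)
  rcases List.suffix_cons_iff.mp hs with rfl | hs
  · exact mk_ne_mk_singleton_of_eq_one (isMinimalLoop_cons_append hw).1 e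
  rcases List.suffix_concat_iff.mp hs with rfl | ⟨t, rfl, ht⟩
  · exact mk_ne_mk_singleton_of_eq_one rfl e
  · intro heq
    exact hx (eq_of_mk_append_singleton_eq (hw.2.of_suffix ht) heq ▸ he)

theorem IsMinimalLoop.exists_eq_cons_append (hv : IsMinimalLoop v) :
    ∃ x w, v = invLetter x :: (w ++ [x]) ∧ IsLoop {invLetter x} w := by
  obtain ⟨c, r, rfl⟩ := List.exists_cons_of_ne_nil hv.2.1
  obtain rfl | ⟨w, x, rfl⟩ := List.eq_nil_or_concat' r
  · exact absurd hv.1 (mk_singleton_ne_one c)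
  have hw : Avoids {invLetter x} w := by
    intro s hs e he heq
    rw [Finset.mem_singleton.mp he] at heq
    have hsx := hv.2.2 (s ++ [x])
      ((List.suffix_append_self_iff.mpr hs).trans (List.suffix_cons _ _))
      (by simp) (mk_append_singleton_eq_one_iff.mpr heq)
    have := congrArg List.length hsx
    simp only [List.length_append, List.length_cons] at this
    have := hs.length_le
    omega
  have hwx : mk (w ++ [x]) = mk [invLetter c] := by
    rw [← mk_singleton_inv]
    exact eq_inv_of_mul_eq_one_right (by rw [← mk_cons]; exact hv.1)
  obtain rfl : c = invLetter x := by
    rw [← eq_of_mk_append_singleton_eq hw hwx, invLetter_invLetter]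
  refine ⟨x, w, rfl, ?_, hw⟩
  rwa [invLetter_invLetter, ← mul_mk, mul_eq_right] at hwx

lemma IsMinimalLoop.two_le_length (hv : IsMinimalLoop v) : 2 ≤ v.length := by
  obtain ⟨x, w, rfl, -⟩ := hv.exists_eq_cons_append
  simp

def wrapLoop [Fintype α] (E : Finset (α × Bool)) (k : ℕ) :
    (Σ x : (Eᶜ : Finset (α × Bool)), Words (IsLoop {invLetter x.1}) k) →
    Words (fun w => IsMinimalLoop w ∧ Avoids E w) (k + 2) :=
  fun ⟨⟨x, hx⟩, w, hwl, hw⟩ =>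
    ⟨invLetter x :: (w ++ [x]), by simp [hwl], isMinimalLoop_cons_append hw,
      (avoids_cons_append_iff hw).mpr (Finset.mem_compl.mp hx)⟩

lemma wrapLoop_bijective [Fintype α] (E : Finset (α × Bool)) (k : ℕ) :
    Function.Bijective (wrapLoop E k) := by
  refine ⟨?_, ?_⟩
  · rintro ⟨⟨x, hx⟩, w, hwl, hw⟩ ⟨⟨y, hy⟩, w', hwl', hw'⟩ h
    obtain ⟨-, rfl, rfl⟩ : invLetter x = invLetter y ∧ w = w' ∧ x = y := by
      simpa [wrapLoop] using h
    rfl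
  · rintro ⟨v, hvl, hv, hvE⟩
    obtain ⟨x, w, rfl, hw⟩ := hv.exists_eq_cons_append
    exact ⟨⟨⟨x, Finset.mem_compl.mpr ((avoids_cons_append_iff hw).mp hvE)⟩, w,
      by simpa using hvl, hw⟩, rfl⟩

lemma wordCount_minimalLoop_of_lt_two (E : Finset (α × Bool)) {n : ℕ} (hn : n < 2) :
    wordCount (fun w => IsMinimalLoop w ∧ Avoids E w) n = 0 :=
  Nat.card_eq_zero.mpr (Or.inl ⟨fun v => by have := v.2.2.1.two_le_length; omega⟩)

end Reduced

section Symmetry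

def letterHom (σ : Equiv.Perm (α × Bool)) : FreeGroup α →* FreeGroup α :=
  FreeGroup.lift fun i => mk [σ (i, true)]

variable {σ : Equiv.Perm (α × Bool)}

lemma letterHom_mk (hσ : ∀ x, σ (invLetter x) = invLetter (σ x)) (w : List (α × Bool)) :
    letterHom σ (mk w) = mk (w.map σ) := by
  rw [letterHom, lift_mk, ← prod_map_mk_singleton, List.map_map]
  congr 1
  refine List.map_congr_left fun ⟨i, b⟩ _ => ?_
  cases b
  · simp only [Function.comp_apply, cond_false, mk_singleton_inv, ← hσ]; rfl
  · rfl

variable [DecidableEq α]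

lemma letterHom_injective (hσ : ∀ x, σ (invLetter x) = invLetter (σ x)) :
    Function.Injective (letterHom σ) := by
  have hσ' : ∀ x, σ.symm (invLetter x) = invLetter (σ.symm x) := fun x =>
    σ.injective (by rw [hσ, Equiv.apply_symm_apply, Equiv.apply_symm_apply])
  refine Function.LeftInverse.injective (g := letterHom σ.symm) fun g => ?_
  rw [← mk_toWord (x := g), letterHom_mk hσ, letterHom_mk hσ', List.map_map,
    Equiv.symm_comp_self, List.map_id]

lemma isLoop_map_iff (hσ : ∀ x, σ (invLetter x) = invLetter (σ x)) :
    IsLoop (E.map σ.toEmbedding) (w.map σ) ↔ IsLoop E w := by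
  have hmk (u v : List (α × Bool)) : mk (u.map σ) = mk (v.map σ) ↔ mk u = mk v := by
    rw [← letterHom_mk hσ, ← letterHom_mk hσ, (letterHom_injective hσ).eq_iff]
  refine and_congr (hmk w []) ⟨fun h s hs e he => ?_, fun h s hs e he => ?_⟩
  · rw [Ne, ← hmk s [e]]
    exact h _ (List.suffix_map_iff.mpr ⟨s, hs, rfl⟩) _ (Finset.mem_map_of_mem _ he)
  · obtain ⟨t, ht, rfl⟩ := List.suffix_map_iff.mp hs
    obtain ⟨d, hd, rfl⟩ := Finset.mem_map.mp he
    exact (hmk t [d]).not.mpr (h t ht d hd)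

lemma wordCount_isLoop_map (hσ : ∀ x, σ (invLetter x) = invLetter (σ x))
    (E : Finset (α × Bool)) (n : ℕ) :
    wordCount (IsLoop (E.map σ.toEmbedding)) n = wordCount (IsLoop E) n :=
  Nat.card_congr <| .symm <| (Equiv.listEquivOfEquiv σ).subtypeEquiv fun w => by
    simp [Equiv.listEquivOfEquiv, isLoop_map_iff hσ]

/-- Permuting the generators and inverting one of them act transitively on the letters. -/
theorem wordCount_isLoop_singleton (x y : α × Bool) (n : ℕ) :
    wordCount (IsLoop {x}) n = wordCount (IsLoop {y}) n := by
  have hmove : ∀ σ : Equiv.Perm (α × Bool), (∀ x, σ (invLetter x) = invLetter (σ x)) →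
      ∀ x, wordCount (IsLoop {σ x}) n = wordCount (IsLoop {x}) n := fun σ hσ x => by
    rw [← wordCount_isLoop_map hσ {x}, Finset.map_singleton, Equiv.coe_toEmbedding]
  obtain ⟨i, b⟩ := x
  obtain ⟨j, c⟩ := y
  have hswap := hmove (Equiv.prodCongr (Equiv.swap i j) (Equiv.refl Bool)) (fun _ => rfl) (i, b)
  let flip : α × Bool → α × Bool := fun x => if x.1 = j then invLetter x else x
  have hflip : Function.Involutive flip := fun ⟨k, d⟩ => by
    by_cases h : k = j <;> simp [flip, h, invLetter]
  have hinv := hmove hflip.toPerm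
    (fun ⟨k, d⟩ => by by_cases h : k = j <;> simp [flip, h, invLetter]) (j, b)
  simp only [Equiv.prodCongr_apply, Prod.map, Equiv.swap_apply_left, Equiv.refl_apply] at hswap
  rw [← hswap]
  obtain rfl | rfl : c = b ∨ c = !b := by cases b <;> cases c <;> simp
  · rfl
  · simpa [flip, invLetter] using hinv.symm

theorem wordCount_minimalLoop_add_two [Fintype α] (E : Finset (α × Bool)) (y : α × Bool)
    (k : ℕ) :
    wordCount (fun w => IsMinimalLoop w ∧ Avoids E w) (k + 2) =
      Eᶜ.card * wordCount (IsLoop {y}) k := by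
  rw [wordCount, ← Nat.card_congr (Equiv.ofBijective _ (wrapLoop_bijective E k)), Nat.card_sigma,
    Finset.sum_congr rfl fun x _ => wordCount_isLoop_singleton (invLetter x.1) y k,
    Finset.sum_const, Finset.card_univ, Fintype.card_coe, smul_eq_mul]

end Symmetry

section Series

def wordSeries (P : List (α × Bool) → Prop) : ℚ⟦X⟧ :=
  PowerSeries.mk fun n => (wordCount P n : ℚ)

theorem wordSeries_isLoop [Finite α] (E : Finset (α × Bool)) :
    wordSeries (IsLoop E) =
      1 + wordSeries (fun w => IsMinimalLoop w ∧ Avoids E w) * wordSeries (IsLoop E) := by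
  ext n
  rw [map_add, coeff_mul, coeff_one, wordSeries, coeff_mk, wordCount_isLoop E n]
  push_cast
  simp [wordSeries]

variable [DecidableEq α] [Fintype α]

theorem wordSeries_minimalLoop (E : Finset (α × Bool)) (y : α × Bool) :
    wordSeries (fun w => IsMinimalLoop w ∧ Avoids E w) =
      (Fintype.card (α × Bool) - E.card : ℚ⟦X⟧) * X ^ 2 * wordSeries (IsLoop {y}) := by
  have hcard : (Fintype.card (α × Bool) - E.card : ℚ⟦X⟧) = C (Eᶜ.card : ℚ) := by
    rw [map_natCast, Finset.card_compl, Nat.cast_sub E.card_le_univ]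
  ext n
  rw [hcard, mul_comm (C _), mul_assoc, coeff_X_pow_mul', coeff_C_mul]
  obtain _ | _ | k := n
  · simp [wordSeries, wordCount_minimalLoop_of_lt_two]
  · simp [wordSeries, wordCount_minimalLoop_of_lt_two]
  · simp [wordSeries, wordCount_minimalLoop_add_two E y k]

/-- With `q = 2r` letters, `T = 1 + q z² M T` and `M = 1 + (q - 1) z² M²`, where `M` counts the
loops avoiding one neighbour of the identity; eliminating `M` gives the quadratic. -/
theorem wordSeries_isLoop_quadratic [Nonempty α] :
    (1 - 4 * (Fintype.card α : ℚ⟦X⟧) ^ 2 * X ^ 2)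
        * wordSeries (IsLoop (∅ : Finset (α × Bool))) ^ 2
      + (2 * (Fintype.card α : ℚ⟦X⟧) - 2) * wordSeries (IsLoop (∅ : Finset (α × Bool)))
      - (2 * (Fintype.card α : ℚ⟦X⟧) - 1) = 0 := by
  obtain ⟨i⟩ := ‹Nonempty α›
  have hq : (Fintype.card (α × Bool) : ℚ⟦X⟧) = 2 * Fintype.card α := by
    rw [Fintype.card_prod, Fintype.card_bool]; push_cast; ring
  have hT := wordSeries_isLoop (∅ : Finset (α × Bool))
  rw [wordSeries_minimalLoop ∅ (i, true), hq, Finset.card_empty] at hT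
  have hM := wordSeries_isLoop {(i, true)}
  rw [wordSeries_minimalLoop _ (i, true), hq, Finset.card_singleton] at hM
  set r : ℚ⟦X⟧ := (Fintype.card α : ℚ⟦X⟧)
  set T := wordSeries (IsLoop (∅ : Finset (α × Bool)))
  set M := wordSeries (IsLoop {(i, true)})
  push_cast at hT hM
  linear_combination (T + (2 * r - 1) - 2 * r * (2 * r - 1) * X ^ 2 * M * T) * hT
    + 4 * r ^ 2 * X ^ 2 * T ^ 2 * hM

end Series

lemma prod_map_freeLetterVal (w : List (Fin 2 × Bool)) : (w.map freeLetterVal).prod = mk w := by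
  have hval : freeLetterVal = fun x => mk [x] := by
    ext ⟨i, _ | _⟩ : 1
    · exact mk_singleton_inv (i, true)
    · rfl
  rw [hval, prod_map_mk_singleton]

lemma tCount_eq_wordCount (n : ℕ) :
    tCount n = wordCount (IsLoop (∅ : Finset (Fin 2 × Bool))) n := by
  refine Nat.card_congr (Equiv.ofBijective (fun f => ⟨List.ofFn f.1, List.length_ofFn,
    isLoop_empty_iff.mpr (prod_map_freeLetterVal _ ▸ f.2)⟩) ⟨fun f g h => ?_, ?_⟩)
  · exact Subtype.ext (List.ofFn_injective (congrArg Subtype.val h))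
  · rintro ⟨w, rfl, hw⟩
    refine ⟨⟨w.get, ?_⟩, Subtype.ext (List.ofFn_get w)⟩
    rw [List.ofFn_get, prod_map_freeLetterVal, ← isLoop_empty_iff.mp hw]

end FreeGroupWords

open PowerSeries in
/-- The generating function `T(z) = Σ t_n z^n` of trivial words in the free group on
two generators satisfies `(1 − 16z²)·T² + 2T − 3 = 0`. -/
theorem freeGroup_trivial_words_quadratic :
    (1 - 16 * X ^ 2) * (PowerSeries.mk fun n => (tCount n : ℚ)) ^ 2
      + 2 * (PowerSeries.mk fun n => (tCount n : ℚ)) - 3 = 0 := by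
  have hT : (PowerSeries.mk fun n => (tCount n : ℚ)) =
      FreeGroupWords.wordSeries (FreeGroupWords.IsLoop (∅ : Finset (Fin 2 × Bool))) := by
    simp only [FreeGroupWords.wordSeries, FreeGroupWords.tCount_eq_wordCount]
  have h := FreeGroupWords.wordSeries_isLoop_quadratic (α := Fin 2)
  rw [Fintype.card_fin] at h
  rw [hT]
  linear_combination h

end
end

section
/- Let F be the free group on a finite set of generators and let S ⊆ F be a set closed under taking inverses. Define a step relation R on F by: R w v holds if and only if either v = x·w·x⁻¹ for some generator x or inverse of a generator x, or v = w·r for some r ∈ S. Then for every w ∈ F, w lies in the normal closure of S in F if and only if w is reachable from the identity element under the reflexive–transitive closure of R. -/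
/-!
Conjugation by the generators and their inverses generates conjugation by every element, so
the set of elements reachable from `1` is closed under right multiplication by every
conjugate of an element of `S`. Since `S` is closed under inverses, so is the set of its
conjugates, and the normal closure of `S` is reached one conjugate at a time. Conversely,
every move keeps a normal subgroup containing `S` invariant.
-/

namespace Subgroup

variable {G ι : Type*} [Group G]

def ElementaryMove (f : ι → G) (S : Set G) (u v : G) : Prop :=
  (∃ i, v = f i * u * (f i)⁻¹ ∨ v = (f i)⁻¹ * u * f i) ∨ ∃ r ∈ S, v = u * r

variable {f : ι → G} {S : Set G} {a w : G}

theorem ElementaryMove.mem_of_mem {N : Subgroup G} [hN : N.Normal] (hSN : S ⊆ N) {u v : G}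
    (hmove : ElementaryMove f S u v) (hu : u ∈ N) : v ∈ N := by
  rcases hmove with ⟨i, rfl | rfl⟩ | ⟨r, hr, rfl⟩
  · exact hN.conj_mem u hu (f i)
  · simpa using hN.conj_mem u hu (f i)⁻¹
  · exact N.mul_mem hu (hSN hr)

theorem mem_normalClosure_of_reflTransGen_elementaryMove
    (hw : Relation.ReflTransGen (ElementaryMove f S) 1 w) : w ∈ normalClosure S := by
  induction hw with
  | refl => exact one_mem _
  | tail _ hmove ih => exact hmove.mem_of_mem subset_normalClosure ih

theorem reflTransGen_elementaryMove_conj (hf : closure (Set.range f) = ⊤) (g : G)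
    (hw : Relation.ReflTransGen (ElementaryMove f S) a w) :
    Relation.ReflTransGen (ElementaryMove f S) a (g * w * g⁻¹) := by
  induction (hf ▸ mem_top g : g ∈ closure (Set.range f)) using closure_induction''
    generalizing w with
  | mem _ hx =>
    obtain ⟨i, rfl⟩ := hx
    exact hw.tail (Or.inl ⟨i, Or.inl rfl⟩)
  | inv_mem _ hx =>
    obtain ⟨i, rfl⟩ := hx
    simpa using hw.tail (Or.inl ⟨i, Or.inr rfl⟩)
  | one => simpa using hw
  | mul g h _ _ ihg ihh => simpa [mul_assoc] using ihg (ihh hw)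

theorem reflTransGen_elementaryMove_mul_conj (hf : closure (Set.range f) = ⊤)
    (hw : Relation.ReflTransGen (ElementaryMove f S) a w) {s : G} (hs : s ∈ S) (g : G) :
    Relation.ReflTransGen (ElementaryMove f S) a (w * (g * s * g⁻¹)) := by
  have hconj : Relation.ReflTransGen (ElementaryMove f S) a (g⁻¹ * w * g) := by
    simpa using reflTransGen_elementaryMove_conj hf g⁻¹ hw
  have hmul := reflTransGen_elementaryMove_conj hf g (hconj.tail (Or.inr ⟨s, hs, rfl⟩))
  rwa [show g * (g⁻¹ * w * g * s) * g⁻¹ = w * (g * s * g⁻¹) by group] at hmul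

theorem reflTransGen_elementaryMove_of_mem_normalClosure (hf : closure (Set.range f) = ⊤)
    (hS : ∀ s ∈ S, s⁻¹ ∈ S) (hw : w ∈ normalClosure S) :
    Relation.ReflTransGen (ElementaryMove f S) 1 w := by
  induction hw using closure_induction_right with
  | one => exact .refl
  | mul_right _ _ _ hy ih =>
    obtain ⟨s, hs, hconj⟩ := Group.mem_conjugatesOfSet_iff.mp hy
    obtain ⟨g, rfl⟩ := isConj_iff.mp hconj
    exact reflTransGen_elementaryMove_mul_conj hf ih hs g
  | mul_inv_cancel _ _ _ hy ih =>
    obtain ⟨s, hs, hconj⟩ := Group.mem_conjugatesOfSet_iff.mp hy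
    obtain ⟨g, rfl⟩ := isConj_iff.mp hconj
    rw [show (g * s * g⁻¹)⁻¹ = g * s⁻¹ * g⁻¹ by group]
    exact reflTransGen_elementaryMove_mul_conj hf ih (hS s hs) g

end Subgroup

theorem normalClosure_iff_reachable_general {α : Type*}
    (S : Set (FreeGroup α)) (hS : ∀ s ∈ S, s⁻¹ ∈ S) (w : FreeGroup α) :
    w ∈ Subgroup.normalClosure S ↔
      Relation.ReflTransGen
        (fun u v =>
          (∃ x : α, v = FreeGroup.of x * u * (FreeGroup.of x)⁻¹ ∨
              v = (FreeGroup.of x)⁻¹ * u * FreeGroup.of x) ∨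
          ∃ r ∈ S, v = u * r)
        1 w :=
  ⟨Subgroup.reflTransGen_elementaryMove_of_mem_normalClosure (FreeGroup.closure_range_of α) hS,
    Subgroup.mem_normalClosure_of_reflTransGen_elementaryMove⟩

/-- Irreducibility of the elementary moves (Lemma 3): in the free group `F` on a
finite set of generators, for a set `S` of relators closed under inverses, an element
`w` lies in the normal closure of `S` if and only if `w` is reachable from the
identity by a finite sequence of moves, each of which is either conjugation by a
generator or by the inverse of a generator, or right multiplication by an element
of `S`. -/
theorem normalClosure_iff_reachable {α : Type*} [Finite α]
    (S : Set (FreeGroup α)) (hS : ∀ s ∈ S, s⁻¹ ∈ S) (w : FreeGroup α) :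
    w ∈ Subgroup.normalClosure S ↔
      Relation.ReflTransGen
        (fun u v =>
          (∃ x : α, v = FreeGroup.of x * u * (FreeGroup.of x)⁻¹ ∨
              v = (FreeGroup.of x)⁻¹ * u * FreeGroup.of x) ∨
          ∃ r ∈ S, v = u * r)
        1 w :=
  normalClosure_iff_reachable_general S hS w
end
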